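/- arXiv:1102.4375 — 2 statements merged into one kernel-verified Lean document; each statement's English description precedes it below -/
import Mathlib

section
/- With Σ⁻¹ = (GGᵀ)⁻¹ + Aᵀ(QQᵀ)⁻¹A, μ = Σ((GGᵀ)⁻¹ r + Aᵀ(QQᵀ)⁻¹ b), and K = A GGᵀ Aᵀ + QQᵀ, the minimum value φ of F(x) = ½(x−r)ᵀ(GGᵀ)⁻¹(x−r) + ½(Ax−b)ᵀ(QQᵀ)⁻¹(Ax−b) equals ½ (b − A r)ᵀ K⁻¹ (b − A r). -/
/-!
Write `P = (GGᵀ)⁻¹`, `R = (QQᵀ)⁻¹`, `S = P + AᵀRA` and `c = b − Ar`. Then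
`μ − r = S⁻¹AᵀRc`, and expanding both quadratic terms at `μ` with `S(μ − r) = AᵀRc`
collapses their sum to `cᵀ(R − RAS⁻¹AᵀR)c`. By the Woodbury identity
`R − RAS⁻¹AᵀR = (R⁻¹ + AP⁻¹Aᵀ)⁻¹ = K⁻¹`. Positive definiteness of `GGᵀ` and `QQᵀ` is what
makes `S` invertible.
-/

open Matrix

section CommRing

variable {α n p : Type*} [CommRing α] [Fintype n] [Fintype p]

lemma Matrix.IsSymm.dotProduct_mulVec_comm {R : Matrix p p α} (hR : R.IsSymm) (u v : p → α) :
    u ⬝ᵥ (R *ᵥ v) = v ⬝ᵥ (R *ᵥ u) := by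
  simpa only [hR.eq] using dotProduct_transpose_mulVec R u v

lemma sub_dotProduct_mulVec_sub {R : Matrix p p α} (hR : R.IsSymm) (u c : p → α) :
    (u - c) ⬝ᵥ (R *ᵥ (u - c)) = u ⬝ᵥ (R *ᵥ u) - 2 * (u ⬝ᵥ (R *ᵥ c)) + c ⬝ᵥ (R *ᵥ c) := by
  simp only [mulVec_sub, sub_dotProduct, dotProduct_sub, hR.dotProduct_mulVec_comm c u]
  ring

variable [DecidableEq n] {P : Matrix n n α} {R : Matrix p p α} {A : Matrix p n α}

lemma inv_mulVec_add_sub_eq (hS : IsUnit (P + Aᵀ * R * A).det) (r : n → α) (b : p → α) :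
    (P + Aᵀ * R * A)⁻¹ *ᵥ (P *ᵥ r + Aᵀ *ᵥ (R *ᵥ b)) - r =
      (P + Aᵀ * R * A)⁻¹ *ᵥ (Aᵀ *ᵥ (R *ᵥ (b - A *ᵥ r))) := by
  set S := P + Aᵀ * R * A with hS_def
  calc S⁻¹ *ᵥ (P *ᵥ r + Aᵀ *ᵥ (R *ᵥ b)) - r
      = S⁻¹ *ᵥ (P *ᵥ r + Aᵀ *ᵥ (R *ᵥ b)) - S⁻¹ *ᵥ (S *ᵥ r) := by
        rw [mulVec_mulVec r, nonsing_inv_mul _ hS, one_mulVec]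
    _ = S⁻¹ *ᵥ (Aᵀ *ᵥ (R *ᵥ (b - A *ᵥ r))) := by
        rw [← mulVec_sub, hS_def]
        congr 1
        simp only [add_mulVec, ← mulVec_mulVec, mulVec_sub]
        abel

lemma quadForm_add_quadForm_eq_of_eq_inv_mulVec (hR : R.IsSymm)
    (hS : IsUnit (P + Aᵀ * R * A).det) {r μ : n → α} {b : p → α}
    (hμ : μ = (P + Aᵀ * R * A)⁻¹ *ᵥ (P *ᵥ r + Aᵀ *ᵥ (R *ᵥ b))) :
    (μ - r) ⬝ᵥ (P *ᵥ (μ - r)) + (A *ᵥ μ - b) ⬝ᵥ (R *ᵥ (A *ᵥ μ - b)) =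
      (b - A *ᵥ r) ⬝ᵥ ((R - R * A * (P + Aᵀ * R * A)⁻¹ * Aᵀ * R) *ᵥ (b - A *ᵥ r)) := by
  set S := P + Aᵀ * R * A
  set c := b - A *ᵥ r with hc_def
  set y := Aᵀ *ᵥ (R *ᵥ c)
  set d := μ - r with hd_def
  have hd : d = S⁻¹ *ᵥ y := by rw [hd_def, hμ]; exact inv_mulVec_add_sub_eq hS r b
  have hSd : S *ᵥ d = y := by rw [hd, mulVec_mulVec, mul_nonsing_inv _ hS, one_mulVec]
  have hres : A *ᵥ μ - b = A *ᵥ d - c := by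
    rw [hd_def, hc_def, mulVec_sub]; abel
  have hquad : d ⬝ᵥ (P *ᵥ d) + (A *ᵥ d) ⬝ᵥ (R *ᵥ (A *ᵥ d)) = d ⬝ᵥ (S *ᵥ d) := by
    rw [dotProduct_comm (A *ᵥ d), ← dotProduct_transpose_mulVec A d, mulVec_mulVec,
      mulVec_mulVec, ← dotProduct_add, ← add_mulVec]
  have hcross : ∀ x, (A *ᵥ x) ⬝ᵥ (R *ᵥ c) = x ⬝ᵥ y := fun x => by
    rw [dotProduct_transpose_mulVec, dotProduct_comm]
  have hcorr : c ⬝ᵥ ((R * A * S⁻¹ * Aᵀ * R) *ᵥ c) = d ⬝ᵥ y := by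
    simp only [hd, ← mulVec_mulVec]
    rw [hR.dotProduct_mulVec_comm, hcross]
  calc d ⬝ᵥ (P *ᵥ d) + (A *ᵥ μ - b) ⬝ᵥ (R *ᵥ (A *ᵥ μ - b))
      = d ⬝ᵥ (S *ᵥ d) - 2 * (d ⬝ᵥ y) + c ⬝ᵥ (R *ᵥ c) := by
        rw [hres, sub_dotProduct_mulVec_sub hR, hcross, ← hquad]; ring
    _ = c ⬝ᵥ (R *ᵥ c) - d ⬝ᵥ y := by rw [hSd]; ring
    _ = c ⬝ᵥ ((R - R * A * S⁻¹ * Aᵀ * R) *ᵥ c) := by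
        rw [sub_mulVec, dotProduct_sub, hcorr]

end CommRing

section Real

variable {n p : Type*} [Fintype n] [Fintype p] [DecidableEq n] [DecidableEq p]

lemma posDef_mul_transpose_self {G : Matrix n n ℝ} (hG : IsUnit G.det) : (G * Gᵀ).PosDef := by
  simpa using PosDef.mul_conjTranspose_self G
    (vecMul_injective_iff_isUnit.2 ((isUnit_iff_isUnit_det G).2 hG))

lemma posDef_inv_add_transpose_mul_inv_mul {P : Matrix n n ℝ} {R : Matrix p p ℝ}
    (hP : P.PosDef) (hR : R.PosDef) (A : Matrix p n ℝ) : (P⁻¹ + Aᵀ * R⁻¹ * A).PosDef :=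
  hP.inv.add_posSemidef (by simpa using hR.inv.posSemidef.conjTranspose_mul_mul_same A)

end Real

/-- The minimum value of `F` equals `½(b − Ar)ᵀ K⁻¹ (b − Ar)` with
`K = A GGᵀ Aᵀ + QQᵀ`. -/
theorem minimum_value_phi {m k : ℕ}
    (G : Matrix (Fin m) (Fin m) ℝ) (hG : IsUnit G.det)
    (Q : Matrix (Fin k) (Fin k) ℝ) (hQ : IsUnit Q.det)
    (A : Matrix (Fin k) (Fin m) ℝ) (r : Fin m → ℝ) (b : Fin k → ℝ)
    (F : (Fin m → ℝ) → ℝ)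
    (hF : ∀ x, F x = (1/2) * ((x - r) ⬝ᵥ ((G * Gᵀ)⁻¹ *ᵥ (x - r))) +
        (1/2) * ((A *ᵥ x - b) ⬝ᵥ ((Q * Qᵀ)⁻¹ *ᵥ (A *ᵥ x - b))))
    (Sinv : Matrix (Fin m) (Fin m) ℝ)
    (hSinv : Sinv = (G * Gᵀ)⁻¹ + Aᵀ * (Q * Qᵀ)⁻¹ * A)
    (μ : Fin m → ℝ)
    (hμ : μ = Sinv⁻¹ *ᵥ ((G * Gᵀ)⁻¹ *ᵥ r + Aᵀ *ᵥ ((Q * Qᵀ)⁻¹ *ᵥ b)))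
    (K : Matrix (Fin k) (Fin k) ℝ)
    (hK : K = A * (G * Gᵀ) * Aᵀ + Q * Qᵀ) :
    F μ = (1/2) * ((b - A *ᵥ r) ⬝ᵥ (K⁻¹ *ᵥ (b - A *ᵥ r))) := by
  subst hSinv hK
  have hGG := posDef_mul_transpose_self hG
  have hQQ := posDef_mul_transpose_self hQ
  have hS := posDef_inv_add_transpose_mul_inv_mul hGG hQQ A
  have hR : ((Q * Qᵀ)⁻¹).IsSymm := by simpa using hQQ.inv.isHermitian
  rw [hF, ← mul_add,
    quadForm_add_quadForm_eq_of_eq_inv_mulVec hR ((isUnit_iff_isUnit_det _).1 hS.isUnit) hμ,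
    add_comm (A * (G * Gᵀ) * Aᵀ), add_mul_mul_inv_eq_sub _ _ _ _ hQQ.isUnit hGG.isUnit hS.isUnit]
end

section
/- Sum over directions recovers total probability: if F : ℝⁿ → ℝ is C¹, strictly convex, coercive with minimum φ at μ, and for each ξ ≠ 0 we define X(ξ) = μ + λ(ξ) ξ/‖ξ‖ with λ(ξ) > 0 the unique solution of F(X(ξ)) = φ + ½‖ξ‖², then the map ξ ↦ X(ξ) (extended by X(0) = μ) is a bijection from ℝⁿ to ℝⁿ. -/
/-!
The inverse map is explicit: `x ↦ √(2 (F x - F μ)) · (x - μ)/‖x - μ‖`. Composed after `X` it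
returns `ξ`, because `X ξ - μ` points along `ξ` and `F (X ξ) - F μ = ½‖ξ‖²`. Composed before `X`
it returns `x`, because for `x ≠ μ` strict convexity gives `F x > F μ`, so the preimage candidate
is nonzero, and uniqueness of `λ` forces `λ = ‖x - μ‖` along that direction.
-/

open NormedSpace

lemma StrictConvexOn.lt_of_isMinOn {𝕜 E β : Type*} [Field 𝕜] [LinearOrder 𝕜]
    [IsStrictOrderedRing 𝕜] [AddCommMonoid E] [Module 𝕜 E] [AddCommMonoid β] [PartialOrder β]
    [IsOrderedAddMonoid β] [Module 𝕜 β] [PosSMulMono 𝕜 β] {f : E → β} {s : Set E} {x y : E}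
    (hf : StrictConvexOn 𝕜 s f) (hfx : IsMinOn f s x) (hx : x ∈ s) (hy : y ∈ s) (hxy : x ≠ y) :
    f x < f y := by
  refine (isMinOn_iff.1 hfx y hy).lt_of_ne fun hfxy => hxy (hf.eq_of_isMinOn hfx ?_ hx hy)
  exact isMinOn_iff.2 fun z hz => hfxy ▸ isMinOn_iff.1 hfx z hz

variable {E : Type*} [NormedAddCommGroup E] [NormedSpace ℝ E]

noncomputable def implicitSamplingInv (F : E → ℝ) (μ x : E) : E :=
  √(2 * (F x - F μ)) • NormedSpace.normalize (x - μ)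

@[simp]
lemma implicitSamplingInv_self (F : E → ℝ) (μ : E) : implicitSamplingInv F μ μ = 0 := by
  simp [implicitSamplingInv]

section

variable {F : E → ℝ} {μ : E} {lam : E → ℝ} {X : E → E}

lemma implicitSamplingInv_leftInverse
    (hlam : ∀ ξ, ξ ≠ 0 →
      0 < lam ξ ∧ F (μ + lam ξ • NormedSpace.normalize ξ) = F μ + (1 / 2) * ‖ξ‖ ^ 2)
    (hX0 : X 0 = μ) (hX : ∀ ξ, ξ ≠ 0 → X ξ = μ + lam ξ • NormedSpace.normalize ξ) :
    Function.LeftInverse (implicitSamplingInv F μ) X := by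
  intro ξ
  rcases eq_or_ne ξ 0 with rfl | hξ
  · rw [hX0, implicitSamplingInv_self]
  obtain ⟨hpos, hF⟩ := hlam ξ hξ
  have hsq : 2 * (1 / 2 * ‖ξ‖ ^ 2) = ‖ξ‖ ^ 2 := by ring
  rw [implicitSamplingInv, hX ξ hξ, hF, add_sub_cancel_left, hsq, Real.sqrt_sq (norm_nonneg ξ),
    add_sub_cancel_left, normalize_smul_of_pos hpos, normalize_normalize, norm_smul_normalize]

lemma implicitSamplingInv_rightInverse (hconv : StrictConvexOn ℝ Set.univ F)
    (hmin : ∀ x, F μ ≤ F x)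
    (huniq : ∀ ξ, ξ ≠ 0 → ∀ t > (0 : ℝ),
      F (μ + t • NormedSpace.normalize ξ) = F μ + (1 / 2) * ‖ξ‖ ^ 2 → t = lam ξ)
    (hX0 : X 0 = μ) (hX : ∀ ξ, ξ ≠ 0 → X ξ = μ + lam ξ • NormedSpace.normalize ξ) :
    Function.RightInverse (implicitSamplingInv F μ) X := by
  intro x
  rcases eq_or_ne x μ with rfl | hx
  · rw [implicitSamplingInv_self, hX0]
  have hdiff : 0 < F x - F μ :=
    sub_pos.2 (hconv.lt_of_isMinOn (fun y _ => hmin y) trivial trivial hx.symm)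
  set r := √(2 * (F x - F μ)) with hr
  have hrpos : 0 < r := Real.sqrt_pos.2 (by positivity)
  have hxμ : x - μ ≠ 0 := sub_ne_zero.2 hx
  set ξ := r • NormedSpace.normalize (x - μ)
  change X ξ = x
  have hnorm : ‖ξ‖ = r := by
    rw [norm_smul, norm_normalize hxμ, mul_one, Real.norm_of_nonneg hrpos.le]
  have hdir : NormedSpace.normalize ξ = NormedSpace.normalize (x - μ) := by
    rw [normalize_smul_of_pos hrpos, normalize_normalize]
  have hξ : ξ ≠ 0 := norm_pos_iff.1 (hnorm ▸ hrpos)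
  have hback : μ + ‖x - μ‖ • NormedSpace.normalize (x - μ) = x := by
    rw [norm_smul_normalize, add_sub_cancel]
  have hlam : ‖x - μ‖ = lam ξ := by
    refine huniq ξ hξ _ (norm_pos_iff.2 hxμ) ?_
    rw [hdir, hback, hnorm, hr, Real.sq_sqrt (by positivity)]
    ring
  rw [hX ξ hξ, ← hlam, hdir, hback]

end

theorem implicit_sampling_map_bijective_general {n : ℕ}
    (F : EuclideanSpace ℝ (Fin n) → ℝ)
    (hconv : StrictConvexOn ℝ Set.univ F)
    (μ : EuclideanSpace ℝ (Fin n)) (hmin : ∀ x, F μ ≤ F x)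
    (lam : EuclideanSpace ℝ (Fin n) → ℝ)
    (hlam : ∀ ξ, ξ ≠ 0 → 0 < lam ξ ∧
      F (μ + lam ξ • (‖ξ‖⁻¹ • ξ)) = F μ + (1 / 2) * ‖ξ‖ ^ 2)
    (huniq : ∀ ξ, ξ ≠ 0 → ∀ t > (0 : ℝ),
      F (μ + t • (‖ξ‖⁻¹ • ξ)) = F μ + (1 / 2) * ‖ξ‖ ^ 2 → t = lam ξ)
    (X : EuclideanSpace ℝ (Fin n) → EuclideanSpace ℝ (Fin n))
    (hX0 : X 0 = μ)
    (hX : ∀ ξ, ξ ≠ 0 → X ξ = μ + (lam ξ / ‖ξ‖) • ξ) :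
    Function.Bijective X := by
  have hX' : ∀ ξ, ξ ≠ 0 → X ξ = μ + lam ξ • NormedSpace.normalize ξ := fun ξ hξ => by
    rw [hX ξ hξ, NormedSpace.normalize, smul_smul, div_eq_mul_inv]
  exact Function.bijective_iff_has_inverse.2 ⟨implicitSamplingInv F μ,
    implicitSamplingInv_leftInverse hlam hX0 hX',
    implicitSamplingInv_rightInverse hconv hmin huniq hX0 hX'⟩

/-- The implicit sampling map with `L = I` is a bijection of `ℝⁿ`: for strictly convex,
coercive, `C¹` `F` with minimizer `μ` and `φ = F μ`, the map
`ξ ↦ μ + λ(ξ) ξ/‖ξ‖` (with `λ(ξ) > 0` the unique solution of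
`F(X(ξ)) = φ + ½‖ξ‖²`, and `X(0) = μ`) is one-to-one and onto. -/
theorem implicit_sampling_map_bijective {n : ℕ}
    (F : EuclideanSpace ℝ (Fin n) → ℝ) (hF : ContDiff ℝ 1 F)
    (hconv : StrictConvexOn ℝ Set.univ F)
    (hcoer : Filter.Tendsto F (Filter.cocompact _) Filter.atTop)
    (μ : EuclideanSpace ℝ (Fin n)) (hmin : ∀ x, F μ ≤ F x)
    (lam : EuclideanSpace ℝ (Fin n) → ℝ)
    (hlam : ∀ ξ, ξ ≠ 0 → 0 < lam ξ ∧
      F (μ + lam ξ • (‖ξ‖⁻¹ • ξ)) = F μ + (1 / 2) * ‖ξ‖ ^ 2)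
    (huniq : ∀ ξ, ξ ≠ 0 → ∀ t > (0 : ℝ),
      F (μ + t • (‖ξ‖⁻¹ • ξ)) = F μ + (1 / 2) * ‖ξ‖ ^ 2 → t = lam ξ)
    (X : EuclideanSpace ℝ (Fin n) → EuclideanSpace ℝ (Fin n))
    (hX0 : X 0 = μ)
    (hX : ∀ ξ, ξ ≠ 0 → X ξ = μ + (lam ξ / ‖ξ‖) • ξ) :
    Function.Bijective X :=
  implicit_sampling_map_bijective_general F hconv μ hmin lam hlam huniq X hX0 hX
end
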